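/- arXiv:1811.12138 — 2 statements merged into one kernel-verified Lean document; each statement's English description precedes it below -/
import Mathlib

section
/- Let G be a connected simple graph on n ≥ 2 vertices with largest adjacency eigenvalue λ₁, and let γ^(k) = sqrt( (Σ_i d_{k+1}(i)²) / (Σ_i d_k(i)²) ) where d_k(i) is the number of walks of length k starting at vertex i. Then the sequence {γ^(k)}_{k≥0} is monotonically increasing and converges to λ₁. -/
/-- The adjacency matrix of a simple graph over `ℝ` is Hermitian. -/
theorem adjHerm {n : ℕ} (G : SimpleGraph (Fin n)) [DecidableRel G.Adj] :
    (G.adjMatrix ℝ).IsHermitian := by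
  rw [Matrix.IsHermitian, Matrix.conjTranspose_eq_transpose_of_trivial]
  exact G.isSymm_adjMatrix

/-- The (real) eigenvalues of the adjacency matrix of `G`. -/
noncomputable def graphEigs {n : ℕ} (G : SimpleGraph (Fin n)) [DecidableRel G.Adj] :
    Fin n → ℝ := (adjHerm G).eigenvalues

/-- The Estrada index `EE(G) = ∑ i, exp (λ i)`. -/
noncomputable def estradaIndex {n : ℕ} (G : SimpleGraph (Fin n)) [DecidableRel G.Adj] : ℝ :=
  ∑ i, Real.exp (graphEigs G i)

/-- `dwalk G k i` is the number of walks of length `k` starting at `i`,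
computed as `(A^k 𝟙)_i`. -/
noncomputable def dwalk {n : ℕ} (G : SimpleGraph (Fin n)) [DecidableRel G.Adj]
    (k : ℕ) (i : Fin n) : ℝ :=
  ((G.adjMatrix ℝ) ^ k).mulVec (fun _ => 1) i

/-- The sequence `γ^(k) = sqrt((∑ i, d_{k+1}(i)²)/(∑ i, d_k(i)²))`. -/
noncomputable def gammaSeq {n : ℕ} (G : SimpleGraph (Fin n)) [DecidableRel G.Adj]
    (k : ℕ) : ℝ :=
  Real.sqrt ((∑ i, dwalk G (k + 1) i ^ 2) / (∑ i, dwalk G k i ^ 2))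

/-!
Write `S k = ∑ i, d_k(i)² = 𝟙 ⬝ A^(2k) 𝟙`, so that `γ^(k)² = S (k+1) / S k`. Since
`S (k+1) = ⟨A^k 𝟙, A^(k+2) 𝟙⟩`, Cauchy–Schwarz gives `S (k+1)² ≤ S k * S (k+2)`: the ratios
increase. Expanding in an orthonormal eigenbasis, `S k ≤ n λ₁^(2k)` because for a matrix with
nonnegative entries `λ₁` is the spectral radius (test the Rayleigh quotient on `|v|`), and
`λ₁^(2k) ≤ S k` by Jensen's inequality for the unit vector `w = |v₁|`, with `A^k w ≤ A^k 𝟙`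
entrywise. Increasing ratios of a sequence squeezed between two multiples of `(λ₁²)^k` converge
to `λ₁²`.
-/

open Matrix Finset Filter Topology

namespace Matrix.IsHermitian

variable {ι : Type*} [Fintype ι] {A : Matrix ι ι ℝ}

theorem mulVec_dotProduct (hA : A.IsHermitian) (x y : ι → ℝ) : A *ᵥ x ⬝ᵥ y = x ⬝ᵥ A *ᵥ y := by
  rw [dotProduct_comm, dotProduct_mulVec, ← mulVec_transpose,
    ← conjTranspose_eq_transpose_of_trivial, hA.eq, dotProduct_comm]

variable [DecidableEq ι]

theorem pow_mulVec_dotProduct_pow_mulVec (hA : A.IsHermitian) (a b : ℕ) (x : ι → ℝ) :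
    A ^ a *ᵥ x ⬝ᵥ A ^ b *ᵥ x = x ⬝ᵥ A ^ (a + b) *ᵥ x := by
  rw [(hA.pow a).mulVec_dotProduct, mulVec_mulVec, pow_add]

theorem sq_dotProduct_pow_add_mulVec_le (hA : A.IsHermitian) (a b : ℕ) (x : ι → ℝ) :
    (x ⬝ᵥ A ^ (a + b) *ᵥ x) ^ 2 ≤ (x ⬝ᵥ A ^ (2 * a) *ᵥ x) * (x ⬝ᵥ A ^ (2 * b) *ᵥ x) := by
  simp only [two_mul, ← hA.pow_mulVec_dotProduct_pow_mulVec]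
  simpa only [dotProduct, ← sq] using sum_mul_sq_le_sq_mul_sq univ (A ^ a *ᵥ x) (A ^ b *ᵥ x)

theorem eigenvectorBasis_dotProduct_pow_mulVec (hA : A.IsHermitian) (j : ι) (m : ℕ) (x : ι → ℝ) :
    ⇑(hA.eigenvectorBasis j) ⬝ᵥ A ^ m *ᵥ x
      = hA.eigenvalues j ^ m * (⇑(hA.eigenvectorBasis j) ⬝ᵥ x) := by
  rw [← (hA.pow m).mulVec_dotProduct]
  induction m with
  | zero => simp
  | succ m ih =>
    rw [pow_succ, ← mulVec_mulVec, hA.mulVec_eigenvectorBasis, mulVec_smul, smul_dotProduct, ih,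
      smul_eq_mul, pow_succ]
    ring

theorem dotProduct_eq_sum_eigenvectorBasis (hA : A.IsHermitian) (x y : ι → ℝ) :
    x ⬝ᵥ y = ∑ j, (⇑(hA.eigenvectorBasis j) ⬝ᵥ x) * (⇑(hA.eigenvectorBasis j) ⬝ᵥ y) := by
  have h := hA.eigenvectorBasis.sum_inner_mul_inner (WithLp.toLp 2 x) (WithLp.toLp 2 y)
  simp only [EuclideanSpace.inner_eq_star_dotProduct, star_trivial] at h
  rw [dotProduct_comm, ← h]
  exact sum_congr rfl fun j _ => by rw [dotProduct_comm y, mul_comm]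

theorem dotProduct_pow_mulVec_eq_sum (hA : A.IsHermitian) (m : ℕ) (x : ι → ℝ) :
    x ⬝ᵥ A ^ m *ᵥ x = ∑ j, hA.eigenvalues j ^ m * (⇑(hA.eigenvectorBasis j) ⬝ᵥ x) ^ 2 := by
  rw [hA.dotProduct_eq_sum_eigenvectorBasis]
  simp only [hA.eigenvectorBasis_dotProduct_pow_mulVec]
  exact sum_congr rfl fun j _ => by ring

theorem dotProduct_self_eq_sum (hA : A.IsHermitian) (x : ι → ℝ) :
    x ⬝ᵥ x = ∑ j, (⇑(hA.eigenvectorBasis j) ⬝ᵥ x) ^ 2 := by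
  simpa using hA.dotProduct_pow_mulVec_eq_sum 0 x

theorem dotProduct_mulVec_le (hA : A.IsHermitian) {μ : ℝ} (hμ : ∀ j, hA.eigenvalues j ≤ μ)
    (x : ι → ℝ) : x ⬝ᵥ A *ᵥ x ≤ μ * (x ⬝ᵥ x) := by
  rw [← pow_one A, hA.dotProduct_pow_mulVec_eq_sum, hA.dotProduct_self_eq_sum, mul_sum]
  exact sum_le_sum fun j _ => by gcongr; simpa using hμ j

theorem dotProduct_pow_two_mul_mulVec_le (hA : A.IsHermitian) {ρ : ℝ}
    (hρ : ∀ j, |hA.eigenvalues j| ≤ ρ) (k : ℕ) (x : ι → ℝ) :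
    x ⬝ᵥ A ^ (2 * k) *ᵥ x ≤ ρ ^ (2 * k) * (x ⬝ᵥ x) := by
  rw [hA.dotProduct_pow_mulVec_eq_sum, hA.dotProduct_self_eq_sum, mul_sum]
  refine sum_le_sum fun j _ => ?_
  rw [← (even_two_mul k).pow_abs]
  gcongr
  exact hρ j

/-- Jensen's inequality for the spectral measure of `x`. -/
theorem pow_dotProduct_mulVec_le (hA : A.IsHermitian) {x : ι → ℝ} (hx : x ⬝ᵥ x = 1) (k : ℕ) :
    (x ⬝ᵥ A *ᵥ x) ^ (2 * k) ≤ x ⬝ᵥ A ^ (2 * k) *ᵥ x := by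
  have h₁ := hA.dotProduct_pow_mulVec_eq_sum 1 x
  rw [pow_one] at h₁
  rw [h₁, hA.dotProduct_pow_mulVec_eq_sum]
  simp only [pow_one, mul_comm (hA.eigenvalues _ ^ _), mul_comm (hA.eigenvalues _)]
  exact Real.pow_arith_mean_le_arith_mean_pow_of_even univ _ _ (fun j _ => sq_nonneg _)
    (by rw [← hA.dotProduct_self_eq_sum, hx]) (even_two_mul k)

theorem eigenvectorBasis_dotProduct_self (hA : A.IsHermitian) (j : ι) :
    ⇑(hA.eigenvectorBasis j) ⬝ᵥ ⇑(hA.eigenvectorBasis j) = 1 := by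
  have h := real_inner_self_eq_norm_sq (hA.eigenvectorBasis j)
  rwa [hA.eigenvectorBasis.orthonormal.1 j, EuclideanSpace.inner_eq_star_dotProduct, star_trivial,
    one_pow] at h

theorem eigenvalues_eq_dotProduct (hA : A.IsHermitian) (j : ι) :
    hA.eigenvalues j = ⇑(hA.eigenvectorBasis j) ⬝ᵥ A *ᵥ ⇑(hA.eigenvectorBasis j) := by
  simpa using hA.eigenvalues_eq j

end Matrix.IsHermitian

namespace Matrix

variable {ι : Type*} [Fintype ι] {A : Matrix ι ι ℝ}

theorem mulVec_nonneg_of_nonneg (hA : ∀ i j, 0 ≤ A i j) {x : ι → ℝ} (hx : 0 ≤ x) :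
    0 ≤ A *ᵥ x :=
  fun i => dotProduct_nonneg_of_nonneg (hA i) hx

theorem mulVec_mono_of_nonneg (hA : ∀ i j, 0 ≤ A i j) {x y : ι → ℝ} (hxy : x ≤ y) :
    A *ᵥ x ≤ A *ᵥ y :=
  fun i => dotProduct_le_dotProduct_of_nonneg_left hxy (hA i)

theorem abs_mulVec_le (hA : ∀ i j, 0 ≤ A i j) (x : ι → ℝ) : |A *ᵥ x| ≤ A *ᵥ |x| := fun i => by
  simpa [mulVec, dotProduct, abs_mul, abs_of_nonneg (hA i _)] using
    abs_sum_le_sum_abs (fun j => A i j * x j) univ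

theorem abs_dotProduct_abs (x : ι → ℝ) : |x| ⬝ᵥ |x| = x ⬝ᵥ x := by
  simp [dotProduct, abs_mul_abs_self]

theorem abs_dotProduct_mulVec_le (hA : ∀ i j, 0 ≤ A i j) (x : ι → ℝ) :
    |x ⬝ᵥ A *ᵥ x| ≤ |x| ⬝ᵥ A *ᵥ |x| :=
  calc |x ⬝ᵥ A *ᵥ x| ≤ |x| ⬝ᵥ |A *ᵥ x| := by
        simpa [dotProduct, abs_mul] using abs_sum_le_sum_abs (fun i => x i * (A *ᵥ x) i) univ
    _ ≤ |x| ⬝ᵥ A *ᵥ |x| :=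
        dotProduct_le_dotProduct_of_nonneg_left (abs_mulVec_le hA x) (abs_nonneg x)

variable [DecidableEq ι]

theorem pow_mulVec_nonneg_of_nonneg (hA : ∀ i j, 0 ≤ A i j) {x : ι → ℝ} (hx : 0 ≤ x) (k : ℕ) :
    0 ≤ A ^ k *ᵥ x := by
  induction k with
  | zero => simpa using hx
  | succ k ih => rw [pow_succ', ← mulVec_mulVec]; exact mulVec_nonneg_of_nonneg hA ih

theorem pow_mulVec_mono_of_nonneg (hA : ∀ i j, 0 ≤ A i j) {x y : ι → ℝ} (hxy : x ≤ y) (k : ℕ) :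
    A ^ k *ᵥ x ≤ A ^ k *ᵥ y := by
  induction k with
  | zero => simpa using hxy
  | succ k ih => simp only [pow_succ', ← mulVec_mulVec]; exact mulVec_mono_of_nonneg hA ih

end Matrix

namespace Matrix.IsHermitian

variable {ι : Type*} [Fintype ι] [DecidableEq ι] {A : Matrix ι ι ℝ}

/-- Perron–Frobenius for symmetric matrices with nonnegative entries: the largest eigenvalue is
the spectral radius. -/
theorem abs_eigenvalues_le (hA : A.IsHermitian) (hA₀ : ∀ i j, 0 ≤ A i j) {μ : ℝ}
    (hμ : IsGreatest (Set.range hA.eigenvalues) μ) (j : ι) : |hA.eigenvalues j| ≤ μ := by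
  set v := ⇑(hA.eigenvectorBasis j)
  calc |hA.eigenvalues j| = |v ⬝ᵥ A *ᵥ v| := by rw [hA.eigenvalues_eq_dotProduct]
    _ ≤ |v| ⬝ᵥ A *ᵥ |v| := abs_dotProduct_mulVec_le hA₀ v
    _ ≤ μ * (|v| ⬝ᵥ |v|) := hA.dotProduct_mulVec_le (fun i => hμ.2 ⟨i, rfl⟩) _
    _ = μ := by rw [abs_dotProduct_abs, hA.eigenvectorBasis_dotProduct_self, mul_one]

theorem one_dotProduct_pow_two_mul_mulVec_one_le (hA : A.IsHermitian) (hA₀ : ∀ i j, 0 ≤ A i j)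
    {μ : ℝ} (hμ : IsGreatest (Set.range hA.eigenvalues) μ) (k : ℕ) :
    1 ⬝ᵥ A ^ (2 * k) *ᵥ 1 ≤ Fintype.card ι * μ ^ (2 * k) :=
  (hA.dotProduct_pow_two_mul_mulVec_le (hA.abs_eigenvalues_le hA₀ hμ) k 1).trans_eq <| by
    simp [mul_comm]

/-- Compare `1` with `w = |v|` for a unit top eigenvector `v`: `0 ≤ w ≤ 1` and
`μ ≤ w ⬝ᵥ A *ᵥ w`. -/
theorem pow_le_one_dotProduct_pow_two_mul_mulVec_one (hA : A.IsHermitian)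
    (hA₀ : ∀ i j, 0 ≤ A i j) {μ : ℝ} (hμ : IsGreatest (Set.range hA.eigenvalues) μ) (k : ℕ) :
    μ ^ (2 * k) ≤ 1 ⬝ᵥ A ^ (2 * k) *ᵥ 1 := by
  obtain ⟨j, rfl⟩ := hμ.1
  set v := ⇑(hA.eigenvectorBasis j)
  have hvv : v ⬝ᵥ v = 1 := hA.eigenvectorBasis_dotProduct_self j
  have hww : |v| ⬝ᵥ |v| = 1 := by rw [abs_dotProduct_abs, hvv]
  have hw₁ : |v| ≤ 1 := fun i => abs_le_one_iff_mul_self_le_one.2 <|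
    hvv ▸ single_le_sum (f := fun i => v i * v i) (fun i _ => mul_self_nonneg _) (mem_univ i)
  have hle : hA.eigenvalues j ≤ |v| ⬝ᵥ A *ᵥ |v| := by
    rw [hA.eigenvalues_eq_dotProduct]
    exact (le_abs_self _).trans (abs_dotProduct_mulVec_le hA₀ v)
  calc hA.eigenvalues j ^ (2 * k) ≤ (|v| ⬝ᵥ A *ᵥ |v|) ^ (2 * k) :=
        pow_le_pow_left₀ ((abs_nonneg _).trans (hA.abs_eigenvalues_le hA₀ hμ j)) hle _
    _ ≤ |v| ⬝ᵥ A ^ (2 * k) *ᵥ |v| := hA.pow_dotProduct_mulVec_le hww k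
    _ = A ^ k *ᵥ |v| ⬝ᵥ A ^ k *ᵥ |v| := by rw [hA.pow_mulVec_dotProduct_pow_mulVec, two_mul]
    _ ≤ A ^ k *ᵥ 1 ⬝ᵥ A ^ k *ᵥ 1 := by
        have h₀ := pow_mulVec_nonneg_of_nonneg hA₀ (abs_nonneg v) k
        have h₁ := pow_mulVec_mono_of_nonneg hA₀ hw₁ k
        exact (dotProduct_le_dotProduct_of_nonneg_left h₁ h₀).trans
          (dotProduct_le_dotProduct_of_nonneg_right h₁ (h₀.trans h₁))
    _ = 1 ⬝ᵥ A ^ (2 * k) *ᵥ 1 := by rw [hA.pow_mulVec_dotProduct_pow_mulVec, two_mul]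

end Matrix.IsHermitian

theorem le_of_forall_mul_pow_le_mul_pow {a b c C : ℝ} (hb : 0 < b) (hc : 0 < c)
    (h : ∀ k : ℕ, c * a ^ k ≤ C * b ^ k) : a ≤ b := by
  by_contra! hab
  obtain ⟨k, hk⟩ := ((tendsto_pow_atTop_atTop_of_one_lt ((one_lt_div hb).2 hab)).eventually_gt_atTop
    (C / c)).exists
  rw [div_pow, div_lt_div_iff₀ hc (pow_pos hb k)] at hk
  linarith [h k]

theorem monotone_tendsto_ratio_of_sq_le_mul {S : ℕ → ℝ} {c C μ : ℝ} (hμ : 0 < μ) (hc : 0 < c)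
    (hlow : ∀ k, c * μ ^ k ≤ S k) (hup : ∀ k, S k ≤ C * μ ^ k)
    (hconv : ∀ k, S (k + 1) ^ 2 ≤ S k * S (k + 2)) :
    Monotone (fun k => S (k + 1) / S k) ∧
      Tendsto (fun k => S (k + 1) / S k) atTop (𝓝 μ) := by
  set r := fun k => S (k + 1) / S k
  have hS : ∀ k, 0 < S k := fun k => (by positivity : 0 < c * μ ^ k).trans_le (hlow k)
  have hr : ∀ k, 0 < r k := fun k => div_pos (hS _) (hS _)
  have hSr : ∀ k, S (k + 1) = r k * S k := fun k => (div_mul_cancel₀ _ (hS k).ne').symm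
  have hmono : Monotone r := monotone_nat_of_le_succ fun k => by
    simp only [r]
    rw [div_le_div_iff₀ (hS k) (hS (k + 1))]
    nlinarith [hconv k]
  have hle : ∀ m, r m ≤ μ := fun m => by
    refine le_of_forall_mul_pow_le_mul_pow hμ (hS m) (C := C * μ ^ m) fun k => ?_
    calc S m * r m ^ k ≤ S (m + k) := by
          rw [mul_comm]
          exact geom_le (u := fun k => S (m + k)) (hr m).le k fun i _ =>
            (mul_le_mul_of_nonneg_right (hmono (by omega)) (hS _).le).trans_eq (hSr _).symm
      _ ≤ C * μ ^ m * μ ^ k := (hup _).trans_eq (by ring)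
  have hbdd : BddAbove (Set.range r) := ⟨μ, Set.forall_mem_range.2 hle⟩
  refine ⟨hmono, ?_⟩
  convert tendsto_atTop_ciSup hmono hbdd
  refine le_antisymm ?_ (ciSup_le hle)
  refine le_of_forall_mul_pow_le_mul_pow ((hr 0).trans_le (le_ciSup hbdd 0)) hc (C := S 0)
    fun k => (hlow k).trans ?_
  rw [mul_comm]
  exact le_geom ((hr 0).trans_le (le_ciSup hbdd 0)).le k fun i _ =>
    (hSr i).trans_le (mul_le_mul_of_nonneg_right (le_ciSup hbdd i) (hS i).le)

theorem sum_dwalk_sq {n : ℕ} (G : SimpleGraph (Fin n)) [DecidableRel G.Adj] (k : ℕ) :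
    ∑ i, dwalk G k i ^ 2 = 1 ⬝ᵥ G.adjMatrix ℝ ^ (2 * k) *ᵥ 1 := by
  rw [two_mul, ← (adjHerm G).pow_mulVec_dotProduct_pow_mulVec]
  simp only [dotProduct, sq]
  rfl

theorem SimpleGraph.adjMatrix_nonneg {V : Type*} (G : SimpleGraph V) [DecidableRel G.Adj]
    (i j : V) :
    0 ≤ G.adjMatrix ℝ i j := by
  by_cases h : G.Adj i j <;> simp [h]

theorem pos_of_isGreatest_graphEigs {n : ℕ} (hn : 2 ≤ n) (G : SimpleGraph (Fin n))
    [DecidableRel G.Adj] (hconn : G.Connected) {lam1 : ℝ}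
    (hlam : IsGreatest (Set.range (graphEigs G)) lam1) : 0 < lam1 := by
  have : Nontrivial (Fin n) := Fin.nontrivial_iff_two_le.2 hn
  obtain ⟨u⟩ : Nonempty (Fin n) := inferInstance
  obtain ⟨v, huv⟩ := hconn.preconnected.exists_adj_of_nontrivial u
  have : Nonempty G.Dart := ⟨⟨(u, v), huv⟩⟩
  have hdart : (0 : ℝ) < Fintype.card G.Dart := by exact_mod_cast Fintype.card_pos
  have hray := (adjHerm G).dotProduct_mulVec_le (fun j => hlam.2 ⟨j, rfl⟩) 1
  rw [dotProduct_comm, ← G.natCast_card_dart_eq_dotProduct] at hray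
  exact pos_of_mul_pos_left (hdart.trans_le hray) (by simp)

/-- For a connected simple graph on `n ≥ 2` vertices, the sequence
`{γ^(k)}` is monotonically increasing and converges to `λ₁`. -/
theorem gammaSeq_monotone_tendsto {n : ℕ} (hn : 2 ≤ n)
    (G : SimpleGraph (Fin n)) [DecidableRel G.Adj] (hconn : G.Connected)
    (lam1 : ℝ) (hlam : IsGreatest (Set.range (graphEigs G)) lam1) :
    Monotone (gammaSeq G) ∧
      Filter.Tendsto (gammaSeq G) Filter.atTop (nhds lam1) := by
  set A := G.adjMatrix ℝ
  have hA := adjHerm G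
  have hlam0 := pos_of_isGreatest_graphEigs hn G hconn hlam
  have hlow (k : ℕ) : 1 * (lam1 ^ 2) ^ k ≤ 1 ⬝ᵥ A ^ (2 * k) *ᵥ 1 := by
    rw [one_mul, ← pow_mul]
    exact hA.pow_le_one_dotProduct_pow_two_mul_mulVec_one G.adjMatrix_nonneg hlam k
  have hup (k : ℕ) : 1 ⬝ᵥ A ^ (2 * k) *ᵥ 1 ≤ n * (lam1 ^ 2) ^ k := by
    simpa [← pow_mul] using
      hA.one_dotProduct_pow_two_mul_mulVec_one_le G.adjMatrix_nonneg hlam k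
  have hconv (k : ℕ) : (1 ⬝ᵥ A ^ (2 * (k + 1)) *ᵥ 1) ^ 2
      ≤ (1 ⬝ᵥ A ^ (2 * k) *ᵥ 1) * (1 ⬝ᵥ A ^ (2 * (k + 2)) *ᵥ 1) := by
    simpa only [show k + (k + 2) = 2 * (k + 1) by ring] using
      hA.sq_dotProduct_pow_add_mulVec_le k (k + 2) 1
  obtain ⟨hmono, hlim⟩ :=
    monotone_tendsto_ratio_of_sq_le_mul (by positivity) one_pos hlow hup hconv
  have hγ : gammaSeq G = fun k => √((1 ⬝ᵥ A ^ (2 * (k + 1)) *ᵥ 1) / (1 ⬝ᵥ A ^ (2 * k) *ᵥ 1)) :=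
    funext fun k => by simp only [gammaSeq, sum_dwalk_sq, A]
  rw [hγ]
  refine ⟨Real.sqrt_monotone.comp hmono, ?_⟩
  simpa [Function.comp_def, Real.sqrt_sq hlam0.le] using (Real.continuous_sqrt.tendsto _).comp hlim
end

section
/- Let R be an entrywise nonnegative real symmetric ℓ×ℓ matrix with eigenvalues ρ₁ ≥ … ≥ ρ_ℓ, let e be the all-ones vector, and suppose R^j e ≠ 0 for all 0 ≤ j ≤ k, so that ξ^(k) = ‖R^{k+1} e‖ / ‖R^k e‖ is defined. Then EE(R) ≥ e^{ξ^(k)} + (ℓ − 1) + Tr(R) − ξ^(k). -/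
/-
Let ρ be the largest eigenvalue of `R`. Entrywise nonnegativity gives
`|uᵀ R u| ≤ |u|ᵀ R |u| ≤ ρ ‖u‖²`, and applying this to unit eigenvectors shows `|ρᵢ| ≤ ρ` for
every eigenvalue. Hence `‖R v‖ ≤ ρ ‖v‖`, so `0 ≤ ξ ≤ ρ`. Bounding `exp ρᵢ ≥ 1 + ρᵢ` for all but
the top eigenvalue gives `EE(R) ≥ exp ρ + (ℓ - 1) + Tr R - ρ`, and `x ↦ exp x - x` is increasing
on `[0, ∞)`.
-/

noncomputable def eucNorm {l : ℕ} (v : Fin l → ℝ) : ℝ := Real.sqrt (∑ i, v i ^ 2)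

noncomputable def xiSeq {l : ℕ} (R : Matrix (Fin l) (Fin l) ℝ) (f : Fin l → ℝ) (k : ℕ) : ℝ :=
  eucNorm ((R ^ (k + 1)).mulVec f) / eucNorm ((R ^ k).mulVec f)

theorem Matrix.IsSymm.isHermitianReal {l : ℕ} {R : Matrix (Fin l) (Fin l) ℝ}
    (hR : R.IsSymm) : R.IsHermitian := by
  rwa [Matrix.IsHermitian, Matrix.conjTranspose_eq_transpose_of_trivial]

open Matrix

lemma Matrix.abs_dotProduct_mulVec_self_le {n : Type*} [Fintype n] {A : Matrix n n ℝ}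
    (hA : ∀ i j, 0 ≤ A i j) (w : n → ℝ) : |w ⬝ᵥ A *ᵥ w| ≤ |w| ⬝ᵥ A *ᵥ |w| := by
  refine (Finset.abs_sum_le_sum_abs _ _).trans (Finset.sum_le_sum fun i _ => ?_)
  rw [abs_mul, Pi.abs_apply]
  gcongr
  refine (Finset.abs_sum_le_sum_abs _ _).trans_eq (Finset.sum_congr rfl fun j _ => ?_)
  rw [abs_mul, abs_of_nonneg (hA i j), Pi.abs_apply]

namespace Matrix.IsHermitian

variable {n : Type*} [Fintype n] [DecidableEq n]

lemma eigenvectorBasis_repr_mulVec {𝕜 : Type*} [RCLike 𝕜] {A : Matrix n n 𝕜}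
    (hA : A.IsHermitian) (w : EuclideanSpace 𝕜 n) (i : n) :
    hA.eigenvectorBasis.repr (WithLp.toLp 2 (A *ᵥ w)) i
      = hA.eigenvalues i * hA.eigenvectorBasis.repr w i := by
  simpa [eigenvectorBasis, eigenvalues, eigenvalues₀, toLpLin_apply] using
    (isSymmetric_toEuclideanLin_iff.mpr hA).eigenvectorBasis_apply_self_apply
      finrank_euclideanSpace w ((Fintype.equivOfCardEq (Fintype.card_fin _)).symm i)

variable {A : Matrix n n ℝ} (hA : A.IsHermitian)

lemma dotProduct_mulVec_self_eq_sum (w : EuclideanSpace ℝ n) :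
    w ⬝ᵥ A *ᵥ w = ∑ i, hA.eigenvalues i * hA.eigenvectorBasis.repr w i ^ 2 := by
  calc w ⬝ᵥ A *ᵥ w = inner ℝ (WithLp.toLp 2 (A *ᵥ w)) w := by
        simp [EuclideanSpace.inner_eq_star_dotProduct]
    _ = inner ℝ (hA.eigenvectorBasis.repr (WithLp.toLp 2 (A *ᵥ w)))
          (hA.eigenvectorBasis.repr w) :=
        (hA.eigenvectorBasis.repr.inner_map_map _ _).symm
    _ = _ := by
        simp only [PiLp.inner_apply, hA.eigenvectorBasis_repr_mulVec, RCLike.inner_apply,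
          conj_trivial, RCLike.ofReal_real_eq_id, id_eq]
        exact Finset.sum_congr rfl fun i _ => by ring

lemma dotProduct_mulVec_self_le {c : ℝ} (hc : ∀ i, hA.eigenvalues i ≤ c)
    (w : EuclideanSpace ℝ n) :
    w ⬝ᵥ A *ᵥ w ≤ c * ‖w‖ ^ 2 := by
  rw [hA.dotProduct_mulVec_self_eq_sum, ← hA.eigenvectorBasis.repr.norm_map,
    EuclideanSpace.norm_sq_eq, Finset.mul_sum]
  refine Finset.sum_le_sum fun i _ => ?_
  rw [Real.norm_eq_abs, sq_abs]
  exact mul_le_mul_of_nonneg_right (hc i) (sq_nonneg _)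

lemma norm_mulVec_le {c : ℝ} (hc0 : 0 ≤ c) (hc : ∀ i, |hA.eigenvalues i| ≤ c)
    (w : EuclideanSpace ℝ n) : ‖WithLp.toLp 2 (A *ᵥ w)‖ ≤ c * ‖w‖ := by
  refine le_of_pow_le_pow_left₀ two_ne_zero (by positivity) ?_
  rw [← hA.eigenvectorBasis.repr.norm_map, ← hA.eigenvectorBasis.repr.norm_map w, mul_pow,
    EuclideanSpace.norm_sq_eq, EuclideanSpace.norm_sq_eq, Finset.mul_sum]
  gcongr with i
  rw [hA.eigenvectorBasis_repr_mulVec, norm_mul, mul_pow, RCLike.norm_ofReal]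
  gcongr
  exact hc i

lemma abs_eigenvalues_le_of_nonneg (hnn : ∀ i j, 0 ≤ A i j) {c : ℝ}
    (hc : ∀ i, hA.eigenvalues i ≤ c) (i : n) : |hA.eigenvalues i| ≤ c := by
  set u := hA.eigenvectorBasis i
  have hu : ‖u‖ = 1 := hA.eigenvectorBasis.orthonormal.1 i
  have hu_abs : ‖WithLp.toLp 2 |⇑u|‖ = 1 := by
    simpa [EuclideanSpace.norm_eq] using hu
  have hquad : u ⬝ᵥ A *ᵥ u = hA.eigenvalues i := by
    have huu : ⇑u ⬝ᵥ ⇑u = 1 := by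
      have := real_inner_self_eq_norm_sq u
      rw [hu, EuclideanSpace.inner_eq_star_dotProduct] at this
      simpa using this
    rw [hA.mulVec_eigenvectorBasis, dotProduct_smul, huu, smul_eq_mul, mul_one]
  calc |hA.eigenvalues i| = |u ⬝ᵥ A *ᵥ u| := by rw [hquad]
    _ ≤ |⇑u| ⬝ᵥ A *ᵥ |⇑u| := abs_dotProduct_mulVec_self_le hnn u
    _ ≤ c * ‖WithLp.toLp 2 |⇑u|‖ ^ 2 := hA.dotProduct_mulVec_self_le hc _
    _ = c := by rw [hu_abs, one_pow, mul_one]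

end Matrix.IsHermitian

lemma Real.exp_sub_self_le_exp_sub_self {a b : ℝ} (ha : 0 ≤ a) (hab : a ≤ b) :
    Real.exp a - a ≤ Real.exp b - b := by
  have hsplit : Real.exp b = Real.exp a * Real.exp (b - a) := by
    rw [← Real.exp_add, add_sub_cancel]
  nlinarith [mul_le_mul_of_nonneg_left (Real.add_one_le_exp (b - a)) (Real.exp_pos a).le,
    mul_nonneg (sub_nonneg.2 (Real.one_le_exp ha)) (sub_nonneg.2 hab)]

lemma Real.exp_add_card_sub_one_add_sum_sub_le_sum_exp {ι : Type*} [Fintype ι] (f : ι → ℝ)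
    (i : ι) : Real.exp (f i) + (Fintype.card ι - 1) + (∑ j, f j - f i) ≤ ∑ j, Real.exp (f j) := by
  classical
  have hrest : ∑ j ∈ Finset.univ.erase i, (f j + 1) ≤ ∑ j ∈ Finset.univ.erase i, Real.exp (f j) :=
    Finset.sum_le_sum fun j _ => Real.add_one_le_exp (f j)
  rw [Finset.sum_add_distrib, Finset.sum_erase_eq_sub (Finset.mem_univ i), Finset.sum_const,
    Finset.card_erase_of_mem (Finset.mem_univ i), Finset.card_univ, nsmul_one,
    Nat.cast_sub (Fintype.card_pos_iff.2 ⟨i⟩), Nat.cast_one] at hrest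
  rw [← Finset.add_sum_erase _ (fun j => Real.exp (f j)) (Finset.mem_univ i)]
  linarith

lemma eucNorm_eq_norm_toLp {l : ℕ} (v : Fin l → ℝ) :
    eucNorm v = ‖WithLp.toLp 2 v‖ := by
  simp [eucNorm, EuclideanSpace.norm_eq]

lemma xiSeq_nonneg {l : ℕ} (R : Matrix (Fin l) (Fin l) ℝ) (f : Fin l → ℝ) (k : ℕ) :
    0 ≤ xiSeq R f k :=
  div_nonneg (Real.sqrt_nonneg _) (Real.sqrt_nonneg _)

lemma xiSeq_le_of_eucNorm_mulVec_le {l : ℕ} {R : Matrix (Fin l) (Fin l) ℝ} {c : ℝ} (hc : 0 ≤ c)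
    (hR : ∀ v, eucNorm (R *ᵥ v) ≤ c * eucNorm v) (f : Fin l → ℝ) (k : ℕ) : xiSeq R f k ≤ c := by
  rw [xiSeq, pow_succ', ← mulVec_mulVec]
  exact div_le_of_le_mul₀ (Real.sqrt_nonneg _) hc (hR _)

theorem estradaMatrix_ge_exp_xiSeq_general {l : ℕ} (R : Matrix (Fin l) (Fin l) ℝ)
    (hR : R.IsSymm) (hnn : ∀ i j, 0 ≤ R i j)
    (k : ℕ) :
    (∑ i, Real.exp (hR.isHermitianReal.eigenvalues i)) ≥
      Real.exp (xiSeq R (fun _ => 1) k) + ((l : ℝ) - 1) + R.trace -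
        xiSeq R (fun _ => 1) k := by
  set hH := hR.isHermitianReal
  obtain rfl | hl := Nat.eq_zero_or_pos l
  · -- both sides vanish: `ξ = 0 / 0 = 0`
    simp [xiSeq, eucNorm]
  have := Fin.pos_iff_nonempty.mp hl
  obtain ⟨i₀, hmax⟩ := Finite.exists_max hH.eigenvalues
  have habs := hH.abs_eigenvalues_le_of_nonneg hnn hmax
  have hρ₀ : 0 ≤ hH.eigenvalues i₀ := (abs_nonneg _).trans (habs i₀)
  have hnorm : ∀ v, eucNorm (R *ᵥ v) ≤ hH.eigenvalues i₀ * eucNorm v := fun v => by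
    simpa only [eucNorm_eq_norm_toLp] using hH.norm_mulVec_le hρ₀ habs (WithLp.toLp 2 v)
  have hξ := xiSeq_le_of_eucNorm_mulVec_le hρ₀ hnorm (fun _ => 1) k
  have htrace : R.trace = ∑ i, hH.eigenvalues i := by simpa using hH.trace_eq_sum_eigenvalues
  have hsum := Real.exp_add_card_sub_one_add_sum_sub_le_sum_exp hH.eigenvalues i₀
  rw [Fintype.card_fin, ← htrace] at hsum
  linarith [Real.exp_sub_self_le_exp_sub_self (xiSeq_nonneg R (fun _ => 1) k) hξ]

/-- For an entrywise nonnegative real symmetric `ℓ×ℓ` matrix `R`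
and the all-ones vector `e`, if `R^j e ≠ 0` for `0 ≤ j ≤ k`, then
`EE(R) ≥ e^{ξ^(k)} + (ℓ − 1) + Tr(R) − ξ^(k)`. -/
theorem estradaMatrix_ge_exp_xiSeq {l : ℕ} (R : Matrix (Fin l) (Fin l) ℝ)
    (hR : R.IsSymm) (hnn : ∀ i j, 0 ≤ R i j)
    (k : ℕ) (he : ∀ j : ℕ, j ≤ k → (R ^ j).mulVec (fun _ => 1) ≠ 0) :
    (∑ i, Real.exp (hR.isHermitianReal.eigenvalues i)) ≥
      Real.exp (xiSeq R (fun _ => 1) k) + ((l : ℝ) - 1) + R.trace -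
        xiSeq R (fun _ => 1) k :=
  estradaMatrix_ge_exp_xiSeq_general R hR hnn k
end
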